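/- Let Ω be a bounded open subset of ℝ^N (N ≥ 3) and let p₁, p₂, q : closure(Ω) → ℝ be continuous functions satisfying 1 < p₂(x) < q⁻ ≤ q⁺ < p₁(x) < N for all x ∈ closure(Ω), where q⁻ = min_{closure(Ω)} q and q⁺ = max_{closure(Ω)} q. For u : ℝ^N → ℝ of class C¹ with compact support contained in Ω, set J(u) = ∫_Ω (1/p₁(x))|Du|^{p₁(x)} dx + ∫_Ω (1/p₂(x))|Du|^{p₂(x)} dx, I(u) = ∫_Ω (1/q(x))|u|^{q(x)} dx, and ‖u‖ = inf { μ > 0 : ∫_Ω (|Du(x)|/μ)^{p₁(x)} dx ≤ 1 }. Then for every M > 0 there exists K > 0 such that every such u which is not identically zero and satisfies ‖u‖ ≥ K obeys J(u) ≥ M · I(u). -/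

import Mathlib

open MeasureTheory ENNReal

/-- `J(u) = ∫_Ω (1/p₁(x))|Du|^{p₁(x)} dx + ∫_Ω (1/p₂(x))|Du|^{p₂(x)} dx`. -/
noncomputable def Jfun (N : ℕ) (Ω : Set (EuclideanSpace ℝ (Fin N)))
    (p₁ p₂ : EuclideanSpace ℝ (Fin N) → ℝ) (u : EuclideanSpace ℝ (Fin N) → ℝ) : ℝ≥0∞ :=
  (∫⁻ x in Ω, ENNReal.ofReal ((1 / p₁ x) * ‖fderiv ℝ u x‖ ^ p₁ x)) +
    ∫⁻ x in Ω, ENNReal.ofReal ((1 / p₂ x) * ‖fderiv ℝ u x‖ ^ p₂ x)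

/-- `I(u) = ∫_Ω (1/q(x))|u|^{q(x)} dx`. -/
noncomputable def Ifun (N : ℕ) (Ω : Set (EuclideanSpace ℝ (Fin N)))
    (q : EuclideanSpace ℝ (Fin N) → ℝ) (u : EuclideanSpace ℝ (Fin N) → ℝ) : ℝ≥0∞ :=
  ∫⁻ x in Ω, ENNReal.ofReal ((1 / q x) * |u x| ^ q x)

/-- `‖u‖ = inf { μ > 0 : ∫_Ω (|Du(x)|/μ)^{p₁(x)} dx ≤ 1 }`, the Luxemburg norm of
    `|Du|` with respect to the variable exponent `p₁` on `Ω`. -/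
noncomputable def luxGrad (N : ℕ) (Ω : Set (EuclideanSpace ℝ (Fin N)))
    (p₁ : EuclideanSpace ℝ (Fin N) → ℝ) (u : EuclideanSpace ℝ (Fin N) → ℝ) : ℝ :=
  sInf {m : ℝ | 0 < m ∧
    ∫⁻ x in Ω, ENNReal.ofReal ((‖fderiv ℝ u x‖ / m) ^ p₁ x) ≤ 1}


/-!
Write `G(u) = ∫_Ω |Du|^{p₁}`. Since `|u|^q ≤ 1 + |u|^{q⁺}`, Sobolev's inequality (`q⁺ < N`)
followed by a Young-type inequality `t^{q⁺} ≤ ε t^{p₁(x)} + C_ε` (`q⁺ < min p₁`) gives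
`I(u) ≤ ε G(u) + D_ε` for every `ε > 0`, uniformly in `u`. On the other side `G ≤ N J`, and `G(u)`
grows with `‖u‖`, since the modular of `Du / m` exceeds `1` for `m < ‖u‖`. With `ε = 1/(2MN)`
and `‖u‖` so large that `M D_ε ≤ G(u)/(2N)`, this yields `M I(u) ≤ G(u)/N ≤ J(u)`.
-/

open NNReal Module

theorem rpow_le_one_add_rpow {t a b : ℝ} (ht : 0 ≤ t) (ha : 0 ≤ a) (hab : a ≤ b) :
    t ^ a ≤ 1 + t ^ b := by
  rcases le_or_gt t 1 with ht1 | ht1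
  · linarith [Real.rpow_le_one ht ht1 ha, Real.rpow_nonneg ht b]
  · linarith [Real.rpow_le_rpow_of_exponent_le ht1.le hab]

theorem exists_rpow_le_mul_rpow_add {r pm ε : ℝ} (hr : 0 ≤ r) (hrp : r < pm) (hε : 0 < ε) :
    ∃ C : ℝ≥0, ∀ t p : ℝ, 0 ≤ t → pm ≤ p → t ^ r ≤ ε * t ^ p + C := by
  -- beyond `T`, both `t ^ (r - pm) ≤ ε` and `t ^ pm ≤ t ^ p`
  set T := max 1 (ε ^ (-(pm - r)⁻¹))
  have hT : 0 < T := lt_max_of_lt_left one_pos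
  refine ⟨⟨T ^ r, Real.rpow_nonneg hT.le r⟩, fun t p ht hp =>
    show t ^ r ≤ ε * t ^ p + T ^ r from ?_⟩
  have htp : 0 ≤ ε * t ^ p := mul_nonneg hε.le (Real.rpow_nonneg ht p)
  rcases le_or_gt t T with htT | hTt
  · linarith [Real.rpow_le_rpow ht htT hr]
  · have h1t : 1 < t := (le_max_left _ _).trans_lt hTt
    have hεt : ε ^ (-(pm - r)⁻¹) < t := (le_max_right _ _).trans_lt hTt
    have hsmall : t ^ (r - pm) ≤ ε := by
      calc t ^ (r - pm) ≤ (ε ^ (-(pm - r)⁻¹)) ^ (r - pm) :=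
            Real.rpow_le_rpow_of_nonpos (Real.rpow_pos_of_pos hε _) hεt.le (by linarith)
        _ = ε := by
            rw [← Real.rpow_mul hε.le, show -(pm - r)⁻¹ * (r - pm) = 1 by
              field_simp [(sub_pos.2 hrp).ne']; ring, Real.rpow_one]
    calc t ^ r = t ^ pm * t ^ (r - pm) := by
          rw [← Real.rpow_add (by linarith)]; ring_nf
      _ ≤ t ^ p * ε := mul_le_mul (Real.rpow_le_rpow_of_exponent_le h1t.le hp) hsmall
          (Real.rpow_nonneg ht _) (Real.rpow_nonneg ht _)
      _ ≤ ε * t ^ p + T ^ r := by linarith [Real.rpow_nonneg hT.le r]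

theorem IsCompact.exists_lt_forall_le {X : Type*} [TopologicalSpace X] {s : Set X}
    (hs : IsCompact s) {f : X → ℝ} (hf : ContinuousOn f s) {c : ℝ} (hc : ∀ x ∈ s, c < f x) :
    ∃ m, c < m ∧ ∀ x ∈ s, m ≤ f x := by
  rcases s.eq_empty_or_nonempty with rfl | hne
  · exact ⟨c + 1, by linarith, by simp⟩
  · obtain ⟨w, hw, hwmin⟩ := hs.exists_isMinOn hne hf
    exact ⟨f w, hc w hw, fun _ hx => hwmin hx⟩

theorem ofReal_mul_le_of_le_inv_mul_add {I G J : ℝ≥0∞} {M N D : ℝ} (hM : 0 < M) (hN : 0 < N)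
    (hI : I ≤ ENNReal.ofReal (2 * M * N)⁻¹ * G + ENNReal.ofReal D)
    (hG : ENNReal.ofReal (2 * M * N * D) ≤ G) (hJ : G ≤ ENNReal.ofReal N * J) :
    ENNReal.ofReal M * I ≤ J := by
  have h2N : 0 ≤ (2 * N)⁻¹ := by positivity
  calc ENNReal.ofReal M * I
      ≤ ENNReal.ofReal M * (ENNReal.ofReal (2 * M * N)⁻¹ * G + ENNReal.ofReal D) := by gcongr
    _ = ENNReal.ofReal (2 * N)⁻¹ * G + ENNReal.ofReal (2 * N)⁻¹ *
          ENNReal.ofReal (2 * M * N * D) := by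
        have hMN : M * (2 * M * N)⁻¹ = (2 * N)⁻¹ := by field_simp
        have hMD : M * D = (2 * N)⁻¹ * (2 * M * N * D) := by field_simp
        rw [mul_add, ← mul_assoc, ← ENNReal.ofReal_mul hM.le, ← ENNReal.ofReal_mul hM.le,
          ← ENNReal.ofReal_mul h2N, hMN, hMD]
    _ ≤ ENNReal.ofReal (2 * N)⁻¹ * G + ENNReal.ofReal (2 * N)⁻¹ * G := by gcongr
    _ ≤ ENNReal.ofReal N⁻¹ * (ENNReal.ofReal N * J) := by
        rw [← add_mul, ← ENNReal.ofReal_add h2N h2N, ← two_mul, mul_inv,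
          mul_inv_cancel_left₀ two_ne_zero]
        gcongr
    _ = J := by
        rw [← mul_assoc, ← ENNReal.ofReal_mul (by positivity), inv_mul_cancel₀ hN.ne',
          ENNReal.ofReal_one, one_mul]

section SetLIntegral

variable {α : Type*} [MeasurableSpace α] {μ : Measure α} {s : Set α}

theorem exists_setLIntegral_rpow_le_mul_add (hs : MeasurableSet s) {r pm ε : ℝ} (hr : 0 ≤ r)
    (hrp : r < pm) (hε : 0 < ε) :
    ∃ C : ℝ≥0, ∀ f p : α → ℝ, (∀ x, 0 ≤ f x) → (∀ x ∈ s, pm ≤ p x) →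
      ∫⁻ x in s, ENNReal.ofReal (f x ^ r) ∂μ ≤
        ENNReal.ofReal ε * ∫⁻ x in s, ENNReal.ofReal (f x ^ p x) ∂μ + C * μ s := by
  obtain ⟨C, hC⟩ := exists_rpow_le_mul_rpow_add hr hrp hε
  refine ⟨C, fun f p hf hp => ?_⟩
  calc ∫⁻ x in s, ENNReal.ofReal (f x ^ r) ∂μ
      ≤ ∫⁻ x in s, (ENNReal.ofReal ε * ENNReal.ofReal (f x ^ p x) + C) ∂μ := by
        refine setLIntegral_mono' hs fun x hx => ?_
        rw [← ENNReal.ofReal_mul hε.le, ← ENNReal.ofReal_coe_nnreal,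
          ← ENNReal.ofReal_add (mul_nonneg hε.le (Real.rpow_nonneg (hf x) (p x))) C.coe_nonneg]
        exact ENNReal.ofReal_le_ofReal (hC _ _ (hf x) (hp x hx))
    _ = _ := by
        rw [lintegral_add_right _ measurable_const, lintegral_const_mul' _ _ ENNReal.ofReal_ne_top,
          setLIntegral_const]

theorem setLIntegral_inv_mul_rpow_le_measure_add (hs : MeasurableSet s) {f q : α → ℝ} {r : ℝ}
    (hq : ∀ x ∈ s, 1 ≤ q x ∧ q x ≤ r) :
    ∫⁻ x in s, ENNReal.ofReal (1 / q x * |f x| ^ q x) ∂μ ≤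
      μ s + ∫⁻ x in s, ENNReal.ofReal (|f x| ^ r) ∂μ := by
  calc ∫⁻ x in s, ENNReal.ofReal (1 / q x * |f x| ^ q x) ∂μ
      ≤ ∫⁻ x in s, (1 + ENNReal.ofReal (|f x| ^ r)) ∂μ := by
        refine setLIntegral_mono' hs fun x hx => ?_
        obtain ⟨hq1, hqr⟩ := hq x hx
        have hpow := Real.rpow_nonneg (abs_nonneg (f x)) (q x)
        rw [← ENNReal.ofReal_one,
          ← ENNReal.ofReal_add zero_le_one (Real.rpow_nonneg (abs_nonneg _) _)]
        refine ENNReal.ofReal_le_ofReal ?_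
        calc 1 / q x * |f x| ^ q x ≤ |f x| ^ q x :=
              mul_le_of_le_one_left hpow ((div_le_one (by linarith)).2 hq1)
          _ ≤ 1 + |f x| ^ r := rpow_le_one_add_rpow (abs_nonneg _) (by linarith) hqr
    _ = _ := by rw [lintegral_add_left measurable_const, setLIntegral_one]

theorem ofReal_rpow_mul_setLIntegral_div_rpow_le (hs : MeasurableSet s) {f p : α → ℝ} {m pm : ℝ}
    (hm : 1 ≤ m) (hp : ∀ x ∈ s, pm ≤ p x) (hf : ∀ x, 0 ≤ f x) :
    ENNReal.ofReal (m ^ pm) * ∫⁻ x in s, ENNReal.ofReal ((f x / m) ^ p x) ∂μ ≤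
      ∫⁻ x in s, ENNReal.ofReal (f x ^ p x) ∂μ := by
  rw [← lintegral_const_mul' _ _ ENNReal.ofReal_ne_top]
  refine setLIntegral_mono' hs fun x hx => ?_
  have hm0 : 0 < m := one_pos.trans_le hm
  rw [← ENNReal.ofReal_mul (Real.rpow_nonneg hm0.le _)]
  refine ENNReal.ofReal_le_ofReal ?_
  calc m ^ pm * (f x / m) ^ p x ≤ m ^ p x * (f x / m) ^ p x :=
        mul_le_mul_of_nonneg_right (Real.rpow_le_rpow_of_exponent_le hm (hp x hx))
          (Real.rpow_nonneg (div_nonneg (hf x) hm0.le) _)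
    _ = f x ^ p x := by
        rw [← Real.mul_rpow hm0.le (div_nonneg (hf x) hm0.le), mul_div_cancel₀ _ hm0.ne']

theorem setLIntegral_le_mul_setLIntegral_inv_mul (hs : MeasurableSet s) {g p : α → ℝ} {P : ℝ}
    (hp : ∀ x ∈ s, 0 < p x ∧ p x ≤ P) (hg : ∀ x, 0 ≤ g x) :
    ∫⁻ x in s, ENNReal.ofReal (g x) ∂μ ≤
      ENNReal.ofReal P * ∫⁻ x in s, ENNReal.ofReal (1 / p x * g x) ∂μ := by
  rw [← lintegral_const_mul' _ _ ENNReal.ofReal_ne_top]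
  refine setLIntegral_mono' hs fun x hx => ?_
  obtain ⟨hp0, hpP⟩ := hp x hx
  rw [← ENNReal.ofReal_mul (hp0.le.trans hpP)]
  refine ENNReal.ofReal_le_ofReal ?_
  calc g x ≤ P / p x * g x := le_mul_of_one_le_left (hg x) ((one_le_div hp0).2 hpP)
    _ = P * (1 / p x * g x) := by ring

end SetLIntegral

theorem setLIntegral_ofReal_norm_rpow_eq_lintegral {α F : Type*} [MeasurableSpace α]
    [NormedAddCommGroup F] {μ : Measure α} {s : Set α} {f : α → F} (hf : Function.support f ⊆ s)
    {r : ℝ} (hr : 0 < r) :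
    ∫⁻ x in s, ENNReal.ofReal (‖f x‖ ^ r) ∂μ = ∫⁻ x, ‖f x‖ₑ ^ r ∂μ := by
  simp_rw [← ENNReal.ofReal_rpow_of_nonneg (norm_nonneg _) hr.le, ofReal_norm]
  refine setLIntegral_eq_of_support_subset fun x hx => hf fun hfx => hx ?_
  simp [hfx, ENNReal.zero_rpow_of_pos hr]

theorem exists_setLIntegral_norm_rpow_le_fderiv {E F : Type*} [NormedAddCommGroup E]
    [NormedSpace ℝ E] [MeasurableSpace E] [BorelSpace E] [FiniteDimensional ℝ E]
    [NormedAddCommGroup F] [NormedSpace ℝ F] [FiniteDimensional ℝ F]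
    (μ : Measure E) [μ.IsAddHaarMeasure] {s : Set E} (hs : Bornology.IsBounded s) {r : ℝ}
    (hr : 1 ≤ r) (hrE : r < finrank ℝ E) :
    ∃ C : ℝ≥0, ∀ u : E → F, ContDiff ℝ 1 u → tsupport u ⊆ s →
      ∫⁻ x in s, ENNReal.ofReal (‖u x‖ ^ r) ∂μ ≤
        C * ∫⁻ x in s, ENNReal.ofReal (‖fderiv ℝ u x‖ ^ r) ∂μ := by
  have hr0 : 0 < r := one_pos.trans_le hr
  lift r to ℝ≥0 using hr0.le
  refine ⟨eLpNormLESNormFDerivOfLeConst F μ s r r ^ (r : ℝ), fun u hu hus => ?_⟩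
  have hsupp : Function.support u ⊆ s := (subset_tsupport u).trans hus
  rw [setLIntegral_ofReal_norm_rpow_eq_lintegral hsupp hr0,
    setLIntegral_ofReal_norm_rpow_eq_lintegral ((support_fderiv_subset ℝ).trans hus) hr0,
    ← eLpNorm_nnreal_pow_eq_lintegral (NNReal.coe_pos.1 hr0).ne',
    ← eLpNorm_nnreal_pow_eq_lintegral (NNReal.coe_pos.1 hr0).ne',
    ENNReal.coe_rpow_of_nonneg _ hr0.le, ← ENNReal.mul_rpow_of_nonneg _ _ hr0.le]
  exact ENNReal.rpow_le_rpow (eLpNorm_le_eLpNorm_fderiv μ hu hsupp (by exact_mod_cast hr)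
    (by exact_mod_cast hrE) hs) hr0.le

noncomputable def gradModular (N : ℕ) (Ω : Set (EuclideanSpace ℝ (Fin N)))
    (p : EuclideanSpace ℝ (Fin N) → ℝ) (u : EuclideanSpace ℝ (Fin N) → ℝ) : ℝ≥0∞ :=
  ∫⁻ x in Ω, ENNReal.ofReal (‖fderiv ℝ u x‖ ^ p x)

section Functionals

variable {N : ℕ} {Ω : Set (EuclideanSpace ℝ (Fin N))}

theorem gradModular_le_mul_Jfun (hΩ : MeasurableSet Ω) {p₁ : EuclideanSpace ℝ (Fin N) → ℝ}
    {P : ℝ} (hp : ∀ x ∈ Ω, 0 < p₁ x ∧ p₁ x ≤ P) (p₂ u : EuclideanSpace ℝ (Fin N) → ℝ) :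
    gradModular N Ω p₁ u ≤ ENNReal.ofReal P * Jfun N Ω p₁ p₂ u :=
  (setLIntegral_le_mul_setLIntegral_inv_mul hΩ hp fun _ => Real.rpow_nonneg (norm_nonneg _) _).trans
    (mul_le_mul_right le_self_add _)

theorem one_lt_setLIntegral_of_lt_luxGrad {p : EuclideanSpace ℝ (Fin N) → ℝ}
    {u : EuclideanSpace ℝ (Fin N) → ℝ} {m : ℝ} (hm : 0 < m) (hmu : m < luxGrad N Ω p u) :
    1 < ∫⁻ x in Ω, ENNReal.ofReal ((‖fderiv ℝ u x‖ / m) ^ p x) := by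
  by_contra! h
  exact (csInf_le ⟨0, fun _ hy => hy.1.le⟩ ⟨hm, h⟩ : luxGrad N Ω p u ≤ m).not_gt hmu

theorem exists_le_gradModular_of_le_luxGrad (hΩ : MeasurableSet Ω)
    {p : EuclideanSpace ℝ (Fin N) → ℝ} {pm : ℝ} (hpm : 0 < pm) (hp : ∀ x ∈ Ω, pm ≤ p x) (B : ℝ) :
    ∃ K > 0, ∀ u : EuclideanSpace ℝ (Fin N) → ℝ,
      K ≤ luxGrad N Ω p u → ENNReal.ofReal B ≤ gradModular N Ω p u := by
  set m := max 1 (|B| ^ pm⁻¹)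
  have hm : 1 ≤ m := le_max_left _ _
  refine ⟨m + 1, by linarith, fun u hu => ?_⟩
  have hBm : B ≤ m ^ pm :=
    calc B ≤ (|B| ^ pm⁻¹) ^ pm := by
          rw [← Real.rpow_mul (abs_nonneg B), inv_mul_cancel₀ hpm.ne', Real.rpow_one]
          exact le_abs_self B
      _ ≤ m ^ pm := Real.rpow_le_rpow (by positivity) (le_max_right _ _) hpm.le
  calc ENNReal.ofReal B ≤ ENNReal.ofReal (m ^ pm) := ENNReal.ofReal_le_ofReal hBm
    _ ≤ ENNReal.ofReal (m ^ pm) * ∫⁻ x in Ω, ENNReal.ofReal ((‖fderiv ℝ u x‖ / m) ^ p x) :=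
        le_mul_of_one_le_right' (one_lt_setLIntegral_of_lt_luxGrad (by linarith) (by linarith)).le
    _ ≤ gradModular N Ω p u :=
        ofReal_rpow_mul_setLIntegral_div_rpow_le hΩ hm hp fun _ => norm_nonneg _

theorem exists_Ifun_le_mul_gradModular_add (hΩ : MeasurableSet Ω) (hΩb : Bornology.IsBounded Ω)
    {p q : EuclideanSpace ℝ (Fin N) → ℝ} {r pm : ℝ} (hr : 1 ≤ r) (hrN : r < N) (hrp : r < pm)
    (hq : ∀ x ∈ Ω, 1 ≤ q x ∧ q x ≤ r) (hp : ∀ x ∈ Ω, pm ≤ p x) {ε : ℝ} (hε : 0 < ε) :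
    ∃ D : ℝ, ∀ u : EuclideanSpace ℝ (Fin N) → ℝ, ContDiff ℝ 1 u → tsupport u ⊆ Ω →
      Ifun N Ω q u ≤ ENNReal.ofReal ε * gradModular N Ω p u + ENNReal.ofReal D := by
  obtain ⟨S, hS⟩ := exists_setLIntegral_norm_rpow_le_fderiv (F := ℝ) volume hΩb hr
    (by rwa [finrank_euclideanSpace_fin])
  have hη : 0 < ε / (S + 1) := by positivity
  obtain ⟨Y, hY⟩ :=
    exists_setLIntegral_rpow_le_mul_add (μ := volume) hΩ (zero_le_one.trans hr) hrp hη
  have hSη : (S : ℝ≥0∞) * ENNReal.ofReal (ε / (S + 1)) ≤ ENNReal.ofReal ε := by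
    rw [← ENNReal.ofReal_coe_nnreal, ← ENNReal.ofReal_mul S.coe_nonneg]
    refine ENNReal.ofReal_le_ofReal ?_
    rw [mul_div_assoc', div_le_iff₀ (by positivity)]
    nlinarith [S.coe_nonneg]
  have hvol : volume Ω ≠ ∞ := hΩb.measure_lt_top.ne
  refine ⟨(volume Ω + S * (Y * volume Ω)).toReal, fun u hu hus => ?_⟩
  rw [ENNReal.ofReal_toReal (by finiteness)]
  calc Ifun N Ω q u ≤ volume Ω + ∫⁻ x in Ω, ENNReal.ofReal (‖u x‖ ^ r) := by
        simpa only [Ifun, Real.norm_eq_abs] using setLIntegral_inv_mul_rpow_le_measure_add hΩ hq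
    _ ≤ volume Ω + S * (ENNReal.ofReal (ε / (S + 1)) * gradModular N Ω p u + Y * volume Ω) := by
        gcongr
        refine (hS u hu hus).trans ?_
        gcongr
        exact hY _ p (fun _ => norm_nonneg _) hp
    _ = S * ENNReal.ofReal (ε / (S + 1)) * gradModular N Ω p u +
          (volume Ω + S * (Y * volume Ω)) := by ring
    _ ≤ _ := by gcongr

end Functionals

theorem stmt8_general (N : ℕ) (Ω : Set (EuclideanSpace ℝ (Fin N)))
    (hΩo : IsOpen Ω) (hΩb : Bornology.IsBounded Ω)
    (p₁ p₂ q : EuclideanSpace ℝ (Fin N) → ℝ)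
    (hp₁ : ContinuousOn p₁ (closure Ω))
    (qm qp : ℝ) (hqm : IsLeast (q '' closure Ω) qm)
    (hqp : IsGreatest (q '' closure Ω) qp)
    (hcond : ∀ x ∈ closure Ω, 1 < p₂ x ∧ p₂ x < qm ∧ qp < p₁ x ∧ p₁ x < N) :
    ∀ M : ℝ, 0 < M → ∃ K : ℝ, 0 < K ∧
      ∀ u : EuclideanSpace ℝ (Fin N) → ℝ,
        ContDiff ℝ 1 u → HasCompactSupport u → tsupport u ⊆ Ω → u ≠ 0 →
        K ≤ luxGrad N Ω p₁ u →
        ENNReal.ofReal M * Ifun N Ω q u ≤ Jfun N Ω p₁ p₂ u := by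
  intro M hM
  have hΩ : MeasurableSet Ω := hΩo.measurableSet
  obtain ⟨x₀, hx₀, -⟩ := hqm.1
  obtain ⟨pm, hqpm, hpm⟩ :=
    hΩb.isCompact_closure.exists_lt_forall_le hp₁ fun x hx => (hcond x hx).2.2.1
  have hqp1 : 1 ≤ qp := by linarith [hcond x₀ hx₀, hqp.2 hqm.1]
  have hqpN : qp < N := by linarith [hcond x₀ hx₀]
  have hq : ∀ x ∈ Ω, 1 ≤ q x ∧ q x ≤ qp := fun x hx =>
    ⟨by linarith [hcond x (subset_closure hx), hqm.2 ⟨x, subset_closure hx, rfl⟩],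
      hqp.2 ⟨x, subset_closure hx, rfl⟩⟩
  have hp : ∀ x ∈ Ω, pm ≤ p₁ x := fun x hx => hpm x (subset_closure hx)
  have hpN : ∀ x ∈ Ω, 0 < p₁ x ∧ p₁ x ≤ N := fun x hx =>
    ⟨by linarith [hp x hx], (hcond x (subset_closure hx)).2.2.2.le⟩
  have hN : (0 : ℝ) < N := by linarith
  obtain ⟨D, hD⟩ := exists_Ifun_le_mul_gradModular_add hΩ hΩb hqp1 hqpN hqpm hq hp
    (show 0 < (2 * M * N)⁻¹ by positivity)
  obtain ⟨K, hK, hKG⟩ := exists_le_gradModular_of_le_luxGrad hΩ (by linarith) hp (2 * M * N * D)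
  exact ⟨K, hK, fun u hu _ hus _ hKu => ofReal_mul_le_of_le_inv_mul_add hM hN
    (hD u hu hus) (hKG u hKu) (gradModular_le_mul_Jfun hΩ hpN p₂ u)⟩

/-- Under `1 < p₂(x) < q⁻ ≤ q⁺ < p₁(x) < N` on `closure Ω`, `J(u)/I(u) → ∞` as
    `‖u‖ → ∞`: for every `M > 0` there is `K > 0` such that every nontrivial `C¹`
    function `u` with compact support in `Ω` and `‖u‖ ≥ K` satisfies `J(u) ≥ M I(u)`. -/
theorem stmt8 (N : ℕ) (hN : 3 ≤ N) (Ω : Set (EuclideanSpace ℝ (Fin N)))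
    (hΩo : IsOpen Ω) (hΩb : Bornology.IsBounded Ω)
    (p₁ p₂ q : EuclideanSpace ℝ (Fin N) → ℝ)
    (hp₁ : ContinuousOn p₁ (closure Ω)) (hp₂ : ContinuousOn p₂ (closure Ω))
    (hq : ContinuousOn q (closure Ω))
    (qm qp : ℝ) (hqm : IsLeast (q '' closure Ω) qm)
    (hqp : IsGreatest (q '' closure Ω) qp)
    (hcond : ∀ x ∈ closure Ω, 1 < p₂ x ∧ p₂ x < qm ∧ qp < p₁ x ∧ p₁ x < N) :
    ∀ M : ℝ, 0 < M → ∃ K : ℝ, 0 < K ∧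
      ∀ u : EuclideanSpace ℝ (Fin N) → ℝ,
        ContDiff ℝ 1 u → HasCompactSupport u → tsupport u ⊆ Ω → u ≠ 0 →
        K ≤ luxGrad N Ω p₁ u →
        ENNReal.ofReal M * Ifun N Ω q u ≤ Jfun N Ω p₁ p₂ u :=
  stmt8_general N Ω hΩo hΩb p₁ p₂ q hp₁ qm qp hqm hqp hcond
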